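/- arXiv:1806.07954 — 3 statements merged into one kernel-verified Lean document; each statement's English description precedes it below -/
import Mathlib

section
/- For any regulated function g : [a,b] → ℝ and τ ∈ (a,b), the Dushnik integral of g with respect to the step function f₄ = χ_{[τ,b]} over [a,b] equals g(τ−), the left-hand limit of g at τ. -/
open Set Filter

/-- A tagged partition of `[a,b]`: points `a = pts 0 < pts 1 < … < pts n = b`
with tags `tag j ∈ [pts j, pts (j+1)]`. -/
structure TaggedPartition (a b : ℝ) where
  n : ℕ
  pts : ℕ → ℝ
  tag : ℕ → ℝ
  n_pos : 0 < n
  pts_zero : pts 0 = a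
  pts_last : pts n = b
  pts_mono : ∀ j < n, pts j < pts (j + 1)
  tag_mem : ∀ j < n, tag j ∈ Set.Icc (pts j) (pts (j + 1))

/-- Riemann–Stieltjes sum `S(f, dg, P)`. -/
def RS (f g : ℝ → ℝ) {a b : ℝ} (P : TaggedPartition a b) : ℝ :=
  ∑ j ∈ Finset.range P.n, f (P.tag j) * (g (P.pts (j + 1)) - g (P.pts j))

/-- `P` is `δ`-fine. -/
def IsFine (δ : ℝ → ℝ) {a b : ℝ} (P : TaggedPartition a b) : Prop :=
  ∀ j < P.n, Set.Icc (P.pts j) (P.pts (j + 1)) ⊆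
    Set.Icc (P.tag j - δ (P.tag j)) (P.tag j + δ (P.tag j))

/-- The Kurzweil–Stieltjes integral `(K)∫_a^b f dg` exists and equals `I`. -/
def HasKS (f g : ℝ → ℝ) (a b I : ℝ) : Prop :=
  ∀ ε > 0, ∃ δ : ℝ → ℝ, (∀ t ∈ Set.Icc a b, 0 < δ t ∧ δ t < 1) ∧
    ∀ P : TaggedPartition a b, IsFine δ P → |RS f g P - I| < ε

/-- The division of `P` contains all points of the finite set `D`. -/
def Refines {a b : ℝ} (P : TaggedPartition a b) (D : Finset ℝ) : Prop :=
  ∀ x ∈ D, ∃ j ≤ P.n, P.pts j = x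

/-- All tags of `P` lie strictly inside the corresponding subintervals. -/
def InteriorTags {a b : ℝ} (P : TaggedPartition a b) : Prop :=
  ∀ j < P.n, P.pts j < P.tag j ∧ P.tag j < P.pts (j + 1)

/-- The Dushnik integral `(D)∫_a^b f dg` exists and equals `I`. -/
def HasDushnik (f g : ℝ → ℝ) (a b I : ℝ) : Prop :=
  ∀ ε > 0, ∃ D : Finset ℝ, ↑D ⊆ Set.Icc a b ∧
    ∀ P : TaggedPartition a b, Refines P D → InteriorTags P → |RS f g P - I| < ε

/-- `f` is regulated on `[a,b]`: it has finite one-sided limits (within `[a,b]`)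
at every point where they make sense. -/
def Regulated (f : ℝ → ℝ) (a b : ℝ) : Prop :=
  (∀ t ∈ Set.Ioc a b, ∃ L : ℝ, Filter.Tendsto f (nhdsWithin t (Set.Ico a t)) (nhds L)) ∧
  (∀ t ∈ Set.Ico a b, ∃ L : ℝ, Filter.Tendsto f (nhdsWithin t (Set.Ioc t b)) (nhds L))

/-- The Young sum `S_Y(f, dg, P)`, where `gl t = g(t-)` and `gr t = g(t+)`
are the one-sided limit functions of `g`. -/
def YS (f gl gr g : ℝ → ℝ) {a b : ℝ} (P : TaggedPartition a b) : ℝ :=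
  ∑ j ∈ Finset.range P.n,
    (f (P.pts j) * (gr (P.pts j) - g (P.pts j))
      + f (P.tag j) * (gl (P.pts (j + 1)) - gr (P.pts j))
      + f (P.pts (j + 1)) * (g (P.pts (j + 1)) - gl (P.pts (j + 1))))

/-- The Young integral `(Y)∫_a^b f dg` exists and equals `I` (here `gl`, `gr`
are the one-sided limit functions of `g`). -/
def HasYoung (f gl gr g : ℝ → ℝ) (a b I : ℝ) : Prop :=
  ∀ ε > 0, ∃ D : Finset ℝ, ↑D ⊆ Set.Icc a b ∧
    ∀ P : TaggedPartition a b, Refines P D → InteriorTags P → |YS f gl gr g P - I| < ε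

/-- `f` is a finite step function on `[a,b]`: constant on the open subintervals
of some division `a = σ 0 < … < σ m = b`. -/
def IsStepFunction (f : ℝ → ℝ) (a b : ℝ) : Prop :=
  ∃ (m : ℕ) (σ : ℕ → ℝ), 0 < m ∧ σ 0 = a ∧ σ m = b ∧ (∀ k < m, σ k < σ (k + 1)) ∧
    ∀ k < m, ∀ x ∈ Set.Ioo (σ k) (σ (k + 1)), ∀ y ∈ Set.Ioo (σ k) (σ (k + 1)), f x = f y

/-- The (real-valued) total variation of `g` on `[a,b]`. -/
noncomputable def var (g : ℝ → ℝ) (a b : ℝ) : ℝ :=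
  (eVariationOn g (Set.Icc a b)).toReal

lemma TP.pts_le {a b : ℝ} (P : TaggedPartition a b) :
    ∀ {j k : ℕ}, j ≤ k → k ≤ P.n → P.pts j ≤ P.pts k := by
  intro j k hjk hk
  induction k with
  | zero =>
    have : j = 0 := by omega
    simp [this]
  | succ m ih =>
    rcases Nat.lt_or_ge j (m + 1) with h | h
    · have h1 : P.pts j ≤ P.pts m := ih (Nat.lt_succ_iff.mp h) (by omega)
      have h2 : P.pts m < P.pts (m + 1) := P.pts_mono m (by omega)
      linarith
    · have : j = m + 1 := by omega
      simp [this]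

lemma TP.pts_lt {a b : ℝ} (P : TaggedPartition a b) {j k : ℕ}
    (hjk : j < k) (hk : k ≤ P.n) : P.pts j < P.pts k := by
  have h1 : P.pts j ≤ P.pts (k - 1) := TP.pts_le P (by omega) (by omega)
  have h2 : P.pts (k - 1) < P.pts (k - 1 + 1) := P.pts_mono _ (by omega)
  have : k - 1 + 1 = k := by omega
  rw [this] at h2
  linarith

/-- for regulated `g` and `τ ∈ (a,b)`,
`(D)∫_a^b g d(χ_{[τ,b]}) = g(τ−)`. -/
theorem stmt4 (a b τ : ℝ) (hab : a < b) (hτ : τ ∈ Set.Ioo a b)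
    (g : ℝ → ℝ) (hg : Regulated g a b)
    (gm : ℝ) (hgm : Filter.Tendsto g (nhdsWithin τ (Set.Ico a τ)) (nhds gm)) :
    HasDushnik g (Set.indicator (Set.Icc τ b) (fun _ => (1 : ℝ))) a b gm := by
  intro ε hε
  obtain ⟨δ, hδ0, hδ⟩ := Metric.tendsto_nhdsWithin_nhds.mp hgm ε hε
  obtain ⟨hτa, hτb⟩ := hτ
  set c := max a (τ - δ) with hc
  have hca : a ≤ c := le_max_left _ _
  have hcτ : c < τ := max_lt hτa (by linarith)
  refine ⟨{a, c, τ, b}, ?_, ?_⟩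
  · intro x hx
    simp only [Finset.coe_insert, Finset.coe_singleton, Set.mem_insert_iff,
      Set.mem_singleton_iff] at hx
    rcases hx with rfl | rfl | rfl | rfl <;> constructor <;> linarith
  · intro P href htags
    obtain ⟨j0, hj0n, hj0⟩ := href τ (by simp)
    obtain ⟨k, hkn, hk⟩ := href c (by simp)
    have hj0pos : 0 < j0 := by
      rcases Nat.eq_zero_or_pos j0 with h | h
      · exfalso; rw [h, P.pts_zero] at hj0; linarith
      · exact h
    have hj0lt : j0 < P.n := by
      rcases lt_or_eq_of_le hj0n with h | h
      · exact h
      · exfalso; rw [h, P.pts_last] at hj0; linarith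
    have hle_b : ∀ m ≤ P.n, P.pts m ≤ b := fun m hm => by
      have := TP.pts_le P hm le_rfl; rw [P.pts_last] at this; exact this
    have hge_a : ∀ m ≤ P.n, a ≤ P.pts m := fun m hm => by
      have := TP.pts_le P (Nat.zero_le m) hm; rw [P.pts_zero] at this; exact this
    set f := Set.indicator (Set.Icc τ b) (fun _ => (1 : ℝ)) with hf
    have hfval : ∀ m ≤ P.n, f (P.pts m) = if j0 ≤ m then 1 else 0 := by
      intro m hm
      by_cases hc' : j0 ≤ m
      · have : τ ≤ P.pts m := by
          rw [← hj0]; exact TP.pts_le P hc' hm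
        simp [hf, Set.indicator_of_mem, Set.mem_Icc, this, hle_b m hm, hc']
      · have hlt : P.pts m < τ := by
          rw [← hj0]; exact TP.pts_lt P (by omega) hj0n
        have : P.pts m ∉ Set.Icc τ b := by
          simp [Set.mem_Icc]; intro h; linarith
        simp [hf, Set.indicator_of_notMem this, hc']
    have hRS : RS g f P = g (P.tag (j0 - 1)) := by
      rw [RS]
      rw [Finset.sum_eq_single_of_mem (j0 - 1)
        (Finset.mem_range.mpr (by omega))]
      · rw [hfval (j0 - 1 + 1) (by omega), hfval (j0 - 1) (by omega)]
        have h1 : j0 ≤ j0 - 1 + 1 := by omega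
        have h2 : ¬ j0 ≤ j0 - 1 := by omega
        simp [h1, h2]
      · intro j hj hne
        rw [Finset.mem_range] at hj
        rw [hfval (j + 1) (by omega), hfval j (by omega)]
        by_cases h : j0 ≤ j
        · have h' : j0 ≤ j + 1 := by omega
          rw [if_pos h, if_pos h']; ring
        · have h' : ¬ j0 ≤ j + 1 := by omega
          rw [if_neg h, if_neg h']; ring
    rw [hRS]
    have htag := htags (j0 - 1) (by omega)
    have hsucc : j0 - 1 + 1 = j0 := by omega
    rw [hsucc, hj0] at htag
    have hkj0 : k < j0 := by
      by_contra h
      have := TP.pts_le P (Nat.le_of_not_lt h) hkn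
      rw [hj0, hk] at this; linarith
    have hcle : c ≤ P.pts (j0 - 1) := by
      rw [← hk]; exact TP.pts_le P (by omega) (by omega)
    have hta : a < P.tag (j0 - 1) := lt_of_le_of_lt (hge_a (j0 - 1) (by omega)) htag.1
    have htδ : τ - δ ≤ c := le_max_right _ _
    have hdist : dist (P.tag (j0 - 1)) τ < δ := by
      rw [Real.dist_eq, abs_of_neg (by linarith)]
      linarith
    have := hδ (x := P.tag (j0 - 1)) ⟨hta.le, htag.2⟩ hdist
    rwa [Real.dist_eq] at this
end

section
/- Let f : [a,b] → ℝ be of bounded variation, g : [a,b] → ℝ bounded, and P = (α,ξ) any tagged partition of [a,b]. Then |S(f,dg,P)| ≤ (|f(a)| + |f(b)| + var_a^b f) · ‖g‖_∞, where S(f,dg,P) = Σ_j f(ξ_j)(g(α_j) − g(α_{j−1})). -/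
open Set Filter

/-! Summation by parts, with the tags extended by `ξ₋₁ = a` and `ξₙ = b`, turns `S(f,dg,P)` into
`f(b) g(b) - f(a) g(a) - ∑_{j=0}^{n} (f(ξ_j) - f(ξ_{j-1})) g(α_j)`. Every `g`-value is bounded by
`‖g‖_∞`, and the sum of the `|f(ξ_j) - f(ξ_{j-1})|` is a variation sum of `f` along the monotone
chain `a ≤ ξ₀ ≤ ⋯ ≤ ξₙ₋₁ ≤ b`, hence at most `var_a^b f`. -/

theorem sum_range_mul_sub_by_parts {R : Type*} [CommRing R] (F G : ℕ → R) (n : ℕ) :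
    ∑ j ∈ Finset.range n, F (j + 1) * (G (j + 1) - G j)
      = F (n + 1) * G n - F 0 * G 0
        - ∑ j ∈ Finset.range (n + 1), (F (j + 1) - F j) * G j := by
  induction n with
  | zero => rw [Finset.range_zero, Finset.sum_empty, Finset.sum_range_one]; ring
  | succ n ih => rw [Finset.sum_range_succ, ih, Finset.sum_range_succ _ (n + 1)]; ring

theorem abs_sum_range_mul_sub_le (F G : ℕ → ℝ) {n : ℕ} {M : ℝ} (hG : ∀ j ≤ n, |G j| ≤ M) :
    |∑ j ∈ Finset.range n, F (j + 1) * (G (j + 1) - G j)|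
      ≤ (|F 0| + |F (n + 1)| + ∑ j ∈ Finset.range (n + 1), |F (j + 1) - F j|) * M := by
  have hterm : ∀ c, ∀ j ≤ n, |c * G j| ≤ |c| * M := fun c j hj => by
    rw [abs_mul]; exact mul_le_mul_of_nonneg_left (hG j hj) (abs_nonneg c)
  have hsum : |∑ j ∈ Finset.range (n + 1), (F (j + 1) - F j) * G j|
      ≤ ∑ j ∈ Finset.range (n + 1), |F (j + 1) - F j| * M :=
    (Finset.abs_sum_le_sum_abs _ _).trans <| Finset.sum_le_sum fun j hj =>
      hterm _ j (Nat.lt_succ_iff.mp (Finset.mem_range.mp hj))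
  rw [sum_range_mul_sub_by_parts, add_mul, add_mul, Finset.sum_mul]
  calc _ ≤ |F (n + 1) * G n| + |F 0 * G 0|
          + |∑ j ∈ Finset.range (n + 1), (F (j + 1) - F j) * G j| :=
        (abs_sub _ _).trans (add_le_add_left (abs_sub _ _) _)
    _ ≤ _ := by linarith [hterm (F (n + 1)) n le_rfl, hterm (F 0) 0 n.zero_le]

theorem BoundedVariationOn.sum_dist_le {α E : Type*} [LinearOrder α] [PseudoMetricSpace E]
    {f : α → E} {s : Set α} (hf : BoundedVariationOn f s) {u : ℕ → α} (hu : Monotone u)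
    (us : ∀ i, u i ∈ s) (n : ℕ) :
    ∑ i ∈ Finset.range n, dist (f (u (i + 1))) (f (u i)) ≤ (eVariationOn f s).toReal := by
  simp only [dist_edist]
  rw [← ENNReal.toReal_sum fun i _ => edist_ne_top _ _]
  exact ENNReal.toReal_mono hf (eVariationOn.sum_le hu us)

namespace TaggedPartition

variable {a b : ℝ} (P : TaggedPartition a b)

theorem strictMonoOn_pts : StrictMonoOn P.pts (Iic P.n) :=
  strictMonoOn_of_lt_add_one ordConnected_Iic fun j _ _ hj => P.pts_mono j hj

theorem pts_mem_Icc {j : ℕ} (hj : j ≤ P.n) : P.pts j ∈ Icc a b := by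
  have hmono := P.strictMonoOn_pts.monotoneOn
  constructor
  · calc a = P.pts 0 := P.pts_zero.symm
      _ ≤ P.pts j := hmono (Nat.zero_le _) hj (Nat.zero_le j)
  · calc P.pts j ≤ P.pts P.n := hmono hj (le_refl P.n) hj
      _ = b := P.pts_last

theorem tag_mem_Icc {j : ℕ} (hj : j < P.n) : P.tag j ∈ Icc a b :=
  ⟨(P.pts_mem_Icc hj.le).1.trans (P.tag_mem j hj).1,
    (P.tag_mem j hj).2.trans (P.pts_mem_Icc hj).2⟩

def tagChain : ℕ → ℝ
  | 0 => a
  | j + 1 => if j < P.n then P.tag j else b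

@[simp] theorem tagChain_zero : P.tagChain 0 = a := rfl

@[simp] theorem tagChain_n_add_one : P.tagChain (P.n + 1) = b := by
  simp [tagChain]

theorem tagChain_add_one {j : ℕ} (hj : j < P.n) : P.tagChain (j + 1) = P.tag j := by
  simp [tagChain, hj]

theorem monotone_tagChain : Monotone P.tagChain := by
  refine monotone_nat_of_le_succ fun i => ?_
  rcases i with _ | j
  · rw [tagChain_zero, P.tagChain_add_one P.n_pos]
    exact (P.tag_mem_Icc P.n_pos).1
  · simp only [tagChain]
    split_ifs with hj hj' hj'
    · exact (P.tag_mem j hj).2.trans (P.tag_mem (j + 1) hj').1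
    · exact (P.tag_mem_Icc hj).2
    · omega
    · exact le_rfl

theorem tagChain_mem_Icc (i : ℕ) : P.tagChain i ∈ Icc a b := by
  have hab : a ≤ b := nonempty_Icc.mp ⟨_, P.pts_mem_Icc (Nat.zero_le _)⟩
  rcases i with _ | j
  · exact left_mem_Icc.mpr hab
  · simp only [tagChain]
    split_ifs with hj
    · exact P.tag_mem_Icc hj
    · exact right_mem_Icc.mpr hab

theorem RS_eq_sum_tagChain (f g : ℝ → ℝ) :
    RS f g P = ∑ j ∈ Finset.range P.n,
      f (P.tagChain (j + 1)) * (g (P.pts (j + 1)) - g (P.pts j)) :=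
  Finset.sum_congr rfl fun j hj => by rw [P.tagChain_add_one (Finset.mem_range.mp hj)]

end TaggedPartition

theorem stmt7_general (a b : ℝ) (f g : ℝ → ℝ) (M : ℝ)
    (hf : BoundedVariationOn f (Set.Icc a b))
    (hM : ∀ t ∈ Set.Icc a b, |g t| ≤ M)
    (P : TaggedPartition a b) :
    |RS f g P| ≤ (|f a| + |f b| + var f a b) * M := by
  have hG : ∀ j ≤ P.n, |g (P.pts j)| ≤ M := fun j hj => hM _ (P.pts_mem_Icc hj)
  have hvar := hf.sum_dist_le P.monotone_tagChain P.tagChain_mem_Icc (P.n + 1)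
  simp only [Real.dist_eq] at hvar
  rw [P.RS_eq_sum_tagChain]
  calc _ ≤ _ := abs_sum_range_mul_sub_le (fun j => f (P.tagChain j)) (fun j => g (P.pts j)) hG
    _ ≤ (|f a| + |f b| + var f a b) * M := by
      simp only [TaggedPartition.tagChain_zero, TaggedPartition.tagChain_n_add_one]
      gcongr
      · exact (abs_nonneg _).trans (hG 0 P.n.zero_le)
      · exact hvar

/-- `|S(f,dg,P)| ≤ (|f(a)| + |f(b)| + var_a^b f) · ‖g‖_∞`. -/
theorem stmt7 (a b : ℝ) (hab : a < b) (f g : ℝ → ℝ) (M : ℝ)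
    (hf : BoundedVariationOn f (Set.Icc a b))
    (hM : ∀ t ∈ Set.Icc a b, |g t| ≤ M)
    (P : TaggedPartition a b) :
    |RS f g P| ≤ (|f a| + |f b| + var f a b) * M :=
  stmt7_general a b f g M hf hM P
end

section
/- If f is a finite step function on [a,b] and g : [a,b] → ℝ is regulated, then both the Kurzweil–Stieltjes integral (K)∫_a^b f dg and the Dushnik integral (D)∫_a^b g df exist, and (K)∫_a^b f dg = f(b)g(b) − f(a)g(a) − (D)∫_a^b g df. -/
open Set Filter

open Finset in
section


section Aux
variable (m : ℕ) (σ : ℕ → ℝ)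

noncomputable def jf (L R : ℕ → ℝ) (x : ℝ) : ℝ :=
  ∑ k ∈ Finset.range m, ((if σ (k+1) ≤ x then L k else 0) + (if σ k < x then R k else 0))

noncomputable def wf (T : ℕ → ℝ) (M : ℕ → ℝ → ℝ) (x : ℝ) : ℝ :=
  ∑ k ∈ Finset.range m, (if σ (k+1) ≤ x then T k else if σ k < x then M k x else 0)

variable (hσ : ∀ k < m, σ k < σ (k+1))
include hσ

lemma monoLt' : ∀ i j, i < j → j ≤ m → σ i < σ j := by
  intro i j hij hjm
  induction j with
  | zero => omega
  | succ j ih =>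
    rcases Nat.lt_succ_iff_lt_or_eq.mp hij with h' | h'
    · exact (ih h' (by omega)).trans (hσ j (by omega))
    · subst h'; exact hσ i (by omega)

lemma monoLe' : ∀ i j, i ≤ j → j ≤ m → σ i ≤ σ j := by
  intro i j hij hjm
  rcases eq_or_lt_of_le hij with rfl | h'
  · rfl
  · exact (monoLt' m σ hσ i j h' hjm).le

lemma idxLt : ∀ i j, i ≤ m → σ i < σ j → i < j := by
  intro i j him hs
  by_contra hc
  push_neg at hc
  exact absurd (monoLe' m σ hσ j i hc him) (not_le.mpr hs)

variable (L R : ℕ → ℝ)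

lemma jf_zero : jf m σ L R (σ 0) = 0 := by
  apply Finset.sum_eq_zero
  intro k hk
  rw [Finset.mem_range] at hk
  rw [if_neg (by exact not_le.mpr (monoLt' m σ hσ 0 (k+1) (by omega) (by omega))),
      if_neg (by exact not_lt.mpr (monoLe' m σ hσ 0 k (by omega) (by omega))), add_zero]

lemma jf_last : jf m σ L R (σ m) = ∑ k ∈ Finset.range m, (L k + R k) := by
  apply Finset.sum_congr rfl
  intro k hk
  rw [Finset.mem_range] at hk
  rw [if_pos (monoLe' m σ hσ (k+1) m (by omega) le_rfl),
      if_pos (monoLt' m σ hσ k m (by omega) le_rfl)]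

lemma jf_const {k : ℕ} {p q : ℝ} (hk : k < m) (hp : σ k < p) (hpq : p ≤ q)
    (hq : q < σ (k+1)) : jf m σ L R q = jf m σ L R p := by
  apply Finset.sum_congr rfl
  intro k' hk'
  rw [Finset.mem_range] at hk'
  have e1 : (σ (k'+1) ≤ q) ↔ (σ (k'+1) ≤ p) := by
    constructor
    · intro h
      have h2 : k' + 1 < k + 1 := idxLt m σ hσ (k'+1) (k+1) (by omega) (lt_of_le_of_lt h hq)
      have := monoLe' m σ hσ (k'+1) k (by omega) (by omega)
      linarith
    · intro h; linarith
  have e2 : (σ k' < q) ↔ (σ k' < p) := by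
    constructor
    · intro h
      have h2 : k' < k + 1 := idxLt m σ hσ k' (k+1) (by omega) (h.trans hq)
      have := monoLe' m σ hσ k' k (by omega) (by omega)
      linarith
    · intro h; linarith
  simp only [e1, e2]

lemma jf_right_eq {k : ℕ} {q : ℝ} (hk : k < m) (hq1 : σ k < q) (hq2 : q < σ (k+1)) :
    jf m σ L R q - jf m σ L R (σ k) = R k := by
  rw [jf, jf, ← Finset.sum_sub_distrib]
  have h0 : ∀ k' ∈ Finset.range m, k' ≠ k →
      (((if σ (k'+1) ≤ q then L k' else 0) + if σ k' < q then R k' else 0) -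
        ((if σ (k'+1) ≤ σ k then L k' else 0) + if σ k' < σ k then R k' else 0)) = 0 := by
    intro k' hk' hne
    rw [Finset.mem_range] at hk'
    have e1 : (σ (k'+1) ≤ q) ↔ (σ (k'+1) ≤ σ k) := by
      constructor
      · intro h
        have h2 : k' + 1 < k + 1 := idxLt m σ hσ (k'+1) (k+1) (by omega) (lt_of_le_of_lt h hq2)
        exact monoLe' m σ hσ (k'+1) k (by omega) (by omega)
      · intro h; linarith
    have e2 : (σ k' < q) ↔ (σ k' < σ k) := by
      constructor
      · intro h
        have h2 : k' < k + 1 := idxLt m σ hσ k' (k+1) (by omega) (h.trans hq2)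
        have h3 : k' ≠ k := hne
        exact monoLt' m σ hσ k' k (by omega) (by omega)
      · intro h; linarith
    simp only [e1, e2]; ring
  rw [Finset.sum_eq_single_of_mem k (Finset.mem_range.mpr hk) h0]
  rw [if_neg (not_le.mpr hq2), if_pos hq1, if_neg (not_le.mpr (hσ k hk)),
      if_neg (lt_irrefl _)]
  ring

lemma jf_left_eq {k : ℕ} {p : ℝ} (hk : k < m) (hp1 : σ k < p) (hp2 : p < σ (k+1)) :
    jf m σ L R (σ (k+1)) - jf m σ L R p = L k := by
  rw [jf, jf, ← Finset.sum_sub_distrib]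
  have h0 : ∀ k' ∈ Finset.range m, k' ≠ k →
      (((if σ (k'+1) ≤ σ (k+1) then L k' else 0) + if σ k' < σ (k+1) then R k' else 0) -
        ((if σ (k'+1) ≤ p then L k' else 0) + if σ k' < p then R k' else 0)) = 0 := by
    intro k' hk' hne
    rw [Finset.mem_range] at hk'
    have e1 : (σ (k'+1) ≤ σ (k+1)) ↔ (σ (k'+1) ≤ p) := by
      constructor
      · intro h
        have h2 : k' + 1 < k + 1 := by
          rcases Nat.lt_or_ge (k'+1) (k+1) with h4 | h4
          · exact h4
          · exfalso
            have := monoLe' m σ hσ (k+1) (k'+1) h4 (by omega)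
            have h5 : σ (k'+1) = σ (k+1) := le_antisymm h this
            have h6 : k' + 1 ≠ k + 1 := by omega
            rcases Nat.lt_or_ge (k+1) (k'+1) with h7 | h7
            · exact absurd h5.symm (ne_of_lt (monoLt' m σ hσ (k+1) (k'+1) h7 (by omega)))
            · omega
        have := monoLe' m σ hσ (k'+1) k (by omega) (by omega)
        linarith
      · intro h
        linarith [hp2.le.trans (le_refl (σ (k+1)))]
    have e2 : (σ k' < σ (k+1)) ↔ (σ k' < p) := by
      constructor
      · intro h
        have h2 : k' < k + 1 := idxLt m σ hσ k' (k+1) (by omega) h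
        have h3 : k' < k := by omega
        have := monoLt' m σ hσ k' k h3 (by omega)
        linarith
      · intro h; linarith
    simp only [e1, e2]; ring
  rw [Finset.sum_eq_single_of_mem k (Finset.mem_range.mpr hk) h0]
  rw [if_pos le_rfl, if_neg (not_le.mpr hp2), if_pos (hσ k hk), if_pos hp1]
  ring

lemma jf_mono (hL : ∀ k, 0 ≤ L k) (hR : ∀ k, 0 ≤ R k) {x y : ℝ} (hxy : x ≤ y) :
    jf m σ L R x ≤ jf m σ L R y := by
  apply Finset.sum_le_sum
  intro k hk
  have h1 : (if σ (k+1) ≤ x then L k else 0) ≤ (if σ (k+1) ≤ y then L k else 0) := by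
    split_ifs <;> first | exact le_rfl | exact hL k | linarith
  have h2 : (if σ k < x then R k else 0) ≤ (if σ k < y then R k else 0) := by
    split_ifs <;> first | exact le_rfl | exact hR k | linarith
  exact add_le_add h1 h2

lemma jf_right_le (hL : ∀ k, 0 ≤ L k) (hR : ∀ k, 0 ≤ R k) {k : ℕ} {q : ℝ}
    (hk : k < m) (hq : σ k < q) :
    R k ≤ jf m σ L R q - jf m σ L R (σ k) := by
  rw [jf, jf, ← Finset.sum_sub_distrib]
  have hnn : ∀ k' ∈ Finset.range m, (0:ℝ) ≤
      (((if σ (k'+1) ≤ q then L k' else 0) + if σ k' < q then R k' else 0) -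
        ((if σ (k'+1) ≤ σ k then L k' else 0) + if σ k' < σ k then R k' else 0)) := by
    intro k' _
    have h1 : (if σ (k'+1) ≤ σ k then L k' else 0) ≤ (if σ (k'+1) ≤ q then L k' else 0) := by
      split_ifs <;> first | exact le_rfl | exact hL k' | linarith
    have h2 : (if σ k' < σ k then R k' else 0) ≤ (if σ k' < q then R k' else 0) := by
      split_ifs <;> first | exact le_rfl | exact hR k' | linarith
    linarith
  have hterm : R k ≤
      (((if σ (k+1) ≤ q then L k else 0) + if σ k < q then R k else 0) -
        ((if σ (k+1) ≤ σ k then L k else 0) + if σ k < σ k then R k else 0)) := by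
    rw [if_neg (not_le.mpr (hσ k hk)), if_neg (lt_irrefl _), if_pos hq]
    split_ifs with h
    · linarith [hL k]
    · linarith
  exact hterm.trans (Finset.single_le_sum hnn (Finset.mem_range.mpr hk))

lemma jf_left_le (hL : ∀ k, 0 ≤ L k) (hR : ∀ k, 0 ≤ R k) {k : ℕ} {p : ℝ}
    (hk : k < m) (hp : p < σ (k+1)) :
    L k ≤ jf m σ L R (σ (k+1)) - jf m σ L R p := by
  rw [jf, jf, ← Finset.sum_sub_distrib]
  have hnn : ∀ k' ∈ Finset.range m, (0:ℝ) ≤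
      (((if σ (k'+1) ≤ σ (k+1) then L k' else 0) + if σ k' < σ (k+1) then R k' else 0) -
        ((if σ (k'+1) ≤ p then L k' else 0) + if σ k' < p then R k' else 0)) := by
    intro k' _
    have h1 : (if σ (k'+1) ≤ p then L k' else 0) ≤ (if σ (k'+1) ≤ σ (k+1) then L k' else 0) := by
      split_ifs <;> first | exact le_rfl | exact hL k' | linarith
    have h2 : (if σ k' < p then R k' else 0) ≤ (if σ k' < σ (k+1) then R k' else 0) := by
      split_ifs <;> first | exact le_rfl | exact hR k' | linarith
    linarith
  have hterm : L k ≤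
      (((if σ (k+1) ≤ σ (k+1) then L k else 0) + if σ k < σ (k+1) then R k else 0) -
        ((if σ (k+1) ≤ p then L k else 0) + if σ k < p then R k else 0)) := by
    rw [if_pos le_rfl, if_neg (not_le.mpr hp), if_pos (hσ k hk)]
    split_ifs with h
    · linarith
    · linarith [hR k]
  exact hterm.trans (Finset.single_le_sum hnn (Finset.mem_range.mpr hk))

variable (T : ℕ → ℝ) (M : ℕ → ℝ → ℝ)

lemma wf_zero : wf m σ T M (σ 0) = 0 := by
  apply Finset.sum_eq_zero
  intro k hk
  rw [Finset.mem_range] at hk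
  rw [if_neg (not_le.mpr (monoLt' m σ hσ 0 (k+1) (by omega) (by omega))),
      if_neg (not_lt.mpr (monoLe' m σ hσ 0 k (by omega) (by omega)))]

lemma wf_last : wf m σ T M (σ m) = ∑ k ∈ Finset.range m, T k := by
  apply Finset.sum_congr rfl
  intro k hk
  rw [Finset.mem_range] at hk
  rw [if_pos (monoLe' m σ hσ (k+1) m (by omega) le_rfl)]

lemma wf_opendiff {k : ℕ} {p q : ℝ} (hk : k < m) (hp : σ k < p) (hpq : p ≤ q)
    (hq : q < σ (k+1)) :
    wf m σ T M q - wf m σ T M p = M k q - M k p := by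
  rw [wf, wf, ← Finset.sum_sub_distrib]
  have h0 : ∀ k' ∈ Finset.range m, k' ≠ k →
      ((if σ (k'+1) ≤ q then T k' else if σ k' < q then M k' q else 0) -
        (if σ (k'+1) ≤ p then T k' else if σ k' < p then M k' p else 0)) = 0 := by
    intro k' hk' hne
    rw [Finset.mem_range] at hk'
    rcases hne.lt_or_gt with h | h
    · have hA : σ (k'+1) ≤ σ k := monoLe' m σ hσ (k'+1) k (by omega) (by omega)
      rw [if_pos (hA.trans (by linarith)), if_pos (hA.trans hp.le), sub_self]
    · have hB : σ (k+1) ≤ σ k' := monoLe' m σ hσ (k+1) k' (by omega) (by omega)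
      have hB1 : σ (k+1) ≤ σ (k'+1) := monoLe' m σ hσ (k+1) (k'+1) (by omega) (by omega)
      rw [if_neg (by linarith), if_neg (by linarith), if_neg (by linarith),
          if_neg (by linarith), sub_self]
  rw [Finset.sum_eq_single_of_mem k (Finset.mem_range.mpr hk) h0]
  rw [if_neg (not_le.mpr hq), if_pos (lt_of_lt_of_le hp hpq),
      if_neg (by linarith), if_pos hp]

lemma wf_right {k : ℕ} {q : ℝ} (hk : k < m) (hq1 : σ k < q) (hq2 : q < σ (k+1)) :
    wf m σ T M q - wf m σ T M (σ k) = M k q := by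
  rw [wf, wf, ← Finset.sum_sub_distrib]
  have h0 : ∀ k' ∈ Finset.range m, k' ≠ k →
      ((if σ (k'+1) ≤ q then T k' else if σ k' < q then M k' q else 0) -
        (if σ (k'+1) ≤ σ k then T k' else if σ k' < σ k then M k' (σ k) else 0)) = 0 := by
    intro k' hk' hne
    rw [Finset.mem_range] at hk'
    rcases hne.lt_or_gt with h | h
    · have hA : σ (k'+1) ≤ σ k := monoLe' m σ hσ (k'+1) k (by omega) (by omega)
      rw [if_pos (hA.trans hq1.le), if_pos hA, sub_self]
    · have hB : σ (k+1) ≤ σ k' := monoLe' m σ hσ (k+1) k' (by omega) (by omega)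
      have hB1 : σ (k+1) ≤ σ (k'+1) := monoLe' m σ hσ (k+1) (k'+1) (by omega) (by omega)
      have hkk1 : σ k < σ (k+1) := hσ k hk
      rw [if_neg (by linarith), if_neg (by linarith), if_neg (by linarith),
          if_neg (by linarith), sub_self]
  rw [Finset.sum_eq_single_of_mem k (Finset.mem_range.mpr hk) h0]
  rw [if_neg (not_le.mpr hq2), if_pos hq1, if_neg (not_le.mpr (hσ k hk)),
      if_neg (lt_irrefl _)]
  ring

lemma wf_left {k : ℕ} {p : ℝ} (hk : k < m) (hp1 : σ k < p) (hp2 : p < σ (k+1)) :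
    wf m σ T M (σ (k+1)) - wf m σ T M p = T k - M k p := by
  rw [wf, wf, ← Finset.sum_sub_distrib]
  have h0 : ∀ k' ∈ Finset.range m, k' ≠ k →
      ((if σ (k'+1) ≤ σ (k+1) then T k' else if σ k' < σ (k+1) then M k' (σ (k+1)) else 0) -
        (if σ (k'+1) ≤ p then T k' else if σ k' < p then M k' p else 0)) = 0 := by
    intro k' hk' hne
    rw [Finset.mem_range] at hk'
    rcases hne.lt_or_gt with h | h
    · have hA : σ (k'+1) ≤ σ k := monoLe' m σ hσ (k'+1) k (by omega) (by omega)
      rw [if_pos (by linarith [hσ k hk]), if_pos (hA.trans hp1.le), sub_self]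
    · have hB : σ (k+1) ≤ σ k' := monoLe' m σ hσ (k+1) k' (by omega) (by omega)
      have hB1 : σ (k+1) < σ (k'+1) := monoLt' m σ hσ (k+1) (k'+1) (by omega) (by omega)
      rw [if_neg (by linarith), if_neg (by linarith), if_neg (by linarith),
          if_neg (by linarith), sub_self]
  rw [Finset.sum_eq_single_of_mem k (Finset.mem_range.mpr hk) h0]
  rw [if_pos le_rfl, if_neg (not_le.mpr hp2), if_pos hp1]

end Aux


lemma locate' (m : ℕ) (σ : ℕ → ℝ) (hσ : ∀ k < m, σ k < σ (k+1)) (hm : 0 < m)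
    (x : ℝ) (hx1 : σ 0 ≤ x) (hx2 : x < σ m) :
    ∃ k < m, σ k ≤ x ∧ x < σ (k+1) := by
  classical
  set S := (Finset.range (m+1)).filter (fun k => σ k ≤ x) with hS
  have h0 : (0 : ℕ) ∈ S := by simp [hS, hx1]
  have hne : S.Nonempty := ⟨0, h0⟩
  set k := S.max' hne with hk
  have hkS : k ∈ S := S.max'_mem hne
  have hkm1 : k ∈ Finset.range (m+1) := (Finset.mem_filter.mp hkS).1
  have hkx : σ k ≤ x := (Finset.mem_filter.mp hkS).2
  have hkm : k < m := by
    by_contra hc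
    have hkm1' : k ≤ m := by simpa [Nat.lt_succ_iff] using hkm1
    have : k = m := by omega
    rw [this] at hkx
    linarith
  refine ⟨k, hkm, hkx, ?_⟩
  by_contra hc
  push_neg at hc
  have : k + 1 ∈ S := by
    simp only [hS, Finset.mem_filter, Finset.mem_range]
    exact ⟨by omega, hc⟩
  have := S.le_max' _ this
  omega

lemma exists_eta (P : ℕ → ℝ → Prop)
    (hmono : ∀ k, ∀ η η' : ℝ, 0 < η → η ≤ η' → P k η' → P k η)
    (h : ∀ k, ∃ η > 0, P k η) (N : ℕ) :
    ∃ η > 0, ∀ k ≤ N, P k η := by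
  induction N with
  | zero =>
    obtain ⟨η, hη, hP⟩ := h 0
    exact ⟨η, hη, by rintro k hk; interval_cases k; exact hP⟩
  | succ N ih =>
    obtain ⟨η1, h1, hP1⟩ := ih
    obtain ⟨η2, h2, hP2⟩ := h (N+1)
    refine ⟨min η1 η2, lt_min h1 h2, fun k hk => ?_⟩
    rcases Nat.lt_succ_iff_lt_or_eq.mp (Nat.lt_succ_of_le hk) with h' | h'
    · exact hmono k _ _ (lt_min h1 h2) (min_le_left _ _) (hP1 k (by omega))
    · subst h'; exact hmono _ _ _ (lt_min h1 h2) (min_le_right _ _) hP2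

lemma dushnik_step (a b : ℝ) (hab : a < b) (f g : ℝ → ℝ)
    (m : ℕ) (σ : ℕ → ℝ) (hm : 0 < m) (hσ0 : σ 0 = a) (hσm : σ m = b)
    (hσ : ∀ k < m, σ k < σ (k + 1))
    (c gl gr : ℕ → ℝ)
    (hc : ∀ k < m, ∀ x ∈ Set.Ioo (σ k) (σ (k + 1)), f x = c k)
    (hgl : ∀ k, 1 ≤ k → k ≤ m → ∀ ε > 0, ∃ η > 0, ∀ x, σ k - η ≤ x → x < σ k → |g x - gl k| < ε)
    (hgr : ∀ k < m, ∀ ε > 0, ∃ η > 0, ∀ x, σ k < x → x ≤ σ k + η → |g x - gr k| < ε) :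
    HasDushnik g f a b
      (∑ k ∈ Finset.range m, (gl (k+1) * (f (σ (k+1)) - c k) + gr k * (c k - f (σ k)))) := by
  classical
  intro ε hε
  set L : ℕ → ℝ := fun k => gl (k+1) * (f (σ (k+1)) - c k) with hLdef
  set R : ℕ → ℝ := fun k => gr k * (c k - f (σ k)) with hRdef
  set AL : ℕ → ℝ := fun k => |f (σ (k+1)) - c k| with hALdef
  set AR : ℕ → ℝ := fun k => |c k - f (σ k)| with hARdef
  set Vb : ℝ := ∑ k ∈ Finset.range m, (AL k + AR k) with hVbdef
  have hVb : 0 ≤ Vb := Finset.sum_nonneg fun k _ => add_nonneg (abs_nonneg _) (abs_nonneg _)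
  set ε' : ℝ := ε / (Vb + 1) with hε'def
  have hε' : 0 < ε' := div_pos hε (by linarith)
  have hALnn : ∀ k, 0 ≤ AL k := fun k => abs_nonneg _
  have hARnn : ∀ k, 0 ≤ AR k := fun k => abs_nonneg _
  set Q : ℕ → ℝ → Prop := fun k η =>
    (k < m → σ k + 3*η ≤ σ (k+1) ∧ ∀ x, σ k < x → x ≤ σ k + η → |g x - gr k| < ε') ∧
    (1 ≤ k → k ≤ m → ∀ x, σ k - η ≤ x → x < σ k → |g x - gl k| < ε') with hQdef
  have hQmono : ∀ k, ∀ η η' : ℝ, 0 < η → η ≤ η' → Q k η' → Q k η := by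
    rintro k η η' hη hle ⟨h1, h2⟩
    constructor
    · intro hk
      obtain ⟨ha1, ha2⟩ := h1 hk
      exact ⟨by linarith, fun x hx1 hx2 => ha2 x hx1 (by linarith)⟩
    · intro hk1 hk2
      exact fun x hx1 hx2 => h2 hk1 hk2 x (by linarith) hx2
  have hQex : ∀ k, ∃ η > 0, Q k η := by
    intro k
    by_cases hk : k < m
    · obtain ⟨η1, hη1, hb1⟩ := hgr k hk ε' hε'
      have hgap : 0 < σ (k+1) - σ k := by linarith [hσ k hk]
      by_cases hk1 : 1 ≤ k
      · obtain ⟨η2, hη2, hb2⟩ := hgl k hk1 (by omega) ε' hε'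
        refine ⟨min (min η1 η2) ((σ (k+1) - σ k)/3),
          lt_min (lt_min hη1 hη2) (by linarith), ?_, ?_⟩
        · intro _
          constructor
          · have := min_le_right (min η1 η2) ((σ (k+1) - σ k)/3)
            linarith
          · intro x hx1 hx2
            refine hb1 x hx1 ?_
            have h3 := min_le_left (min η1 η2) ((σ (k+1) - σ k)/3)
            have h4 := min_le_left η1 η2
            linarith
        · intro _ _ x hx1 hx2
          refine hb2 x ?_ hx2
          have h3 := min_le_left (min η1 η2) ((σ (k+1) - σ k)/3)
          have h4 := min_le_right η1 η2
          linarith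
      · refine ⟨min η1 ((σ (k+1) - σ k)/3), lt_min hη1 (by linarith), ?_, ?_⟩
        · intro _
          constructor
          · have := min_le_right η1 ((σ (k+1) - σ k)/3)
            linarith
          · intro x hx1 hx2
            refine hb1 x hx1 ?_
            have := min_le_left η1 ((σ (k+1) - σ k)/3)
            linarith
        · intro h1; omega
    · by_cases hk2 : 1 ≤ k ∧ k ≤ m
      · obtain ⟨η2, hη2, hb2⟩ := hgl k hk2.1 hk2.2 ε' hε'
        exact ⟨η2, hη2, fun h => (hk h).elim, fun _ _ => hb2⟩
      · exact ⟨1, one_pos, fun h => (hk h).elim, fun h1 h2 => (hk2 ⟨h1, h2⟩).elim⟩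
  obtain ⟨η, hη, hQ⟩ := exists_eta Q hQmono hQex m
  set DD : Finset ℝ := (((Finset.range (m+1)).image σ) ∪ ((Finset.range m).image (fun k => σ k + η))) ∪ ((Finset.Icc 1 m).image (fun k => σ k - η)) with hDDdef
  have hmemσ : ∀ i, i ≤ m → σ i ∈ DD := by
    intro i hi
    simp only [hDDdef, Finset.mem_union, Finset.mem_image, Finset.mem_range, Finset.mem_Icc]
    exact Or.inl (Or.inl ⟨i, by omega, rfl⟩)
  have hmemp : ∀ i, i < m → σ i + η ∈ DD := by
    intro i hi
    simp only [hDDdef, Finset.mem_union, Finset.mem_image, Finset.mem_range, Finset.mem_Icc]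
    exact Or.inl (Or.inr ⟨i, hi, rfl⟩)
  have hmemm : ∀ i, 1 ≤ i → i ≤ m → σ i - η ∈ DD := by
    intro i hi1 hi2
    simp only [hDDdef, Finset.mem_union, Finset.mem_image, Finset.mem_range, Finset.mem_Icc]
    exact Or.inr ⟨i, ⟨hi1, hi2⟩, rfl⟩
  have hgapQ : ∀ i, i < m → σ i + 3*η ≤ σ (i+1) := fun i hi => ((hQ i (by omega)).1 hi).1
  refine ⟨DD, ?_, ?_⟩
  · -- DD ⊆ Icc a b
    intro x hx
    simp only [hDDdef, Finset.coe_union, Set.mem_union, Finset.coe_image, Set.mem_image,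
      Finset.mem_coe, Finset.mem_range, Finset.mem_Icc] at hx
    rcases hx with (⟨k, hk, rfl⟩ | ⟨k, hk, rfl⟩) | ⟨k, hk, rfl⟩
    · rw [Nat.lt_succ_iff] at hk
      exact ⟨hσ0 ▸ monoLe' m σ hσ 0 k (by omega) hk,
            hσm ▸ monoLe' m σ hσ k m hk le_rfl⟩
    · have h1 := hgapQ k hk
      have h2 : σ (k+1) ≤ σ m := monoLe' m σ hσ (k+1) m (by omega) le_rfl
      have h3 : σ 0 ≤ σ k := monoLe' m σ hσ 0 k (by omega) (by omega)
      constructor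
      · rw [← hσ0]; linarith
      · rw [← hσm]; linarith
    · have heq : k - 1 + 1 = k := by omega
      have h1 := hgapQ (k-1) (by omega)
      rw [heq] at h1
      have h2 : σ k ≤ σ m := monoLe' m σ hσ k m hk.2 le_rfl
      have h3 : σ 0 ≤ σ (k-1) := monoLe' m σ hσ 0 (k-1) (by omega) (by omega)
      constructor
      · rw [← hσ0]; linarith
      · rw [← hσm]; linarith
  · intro P href htags
    have hple : ∀ i j, i ≤ j → j ≤ P.n → P.pts i ≤ P.pts j :=
      fun i j => monoLe' P.n P.pts P.pts_mono i j
    have hb' : ∀ j, j ≤ P.n → P.pts j ≤ b := by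
      intro j hj
      have := hple j P.n hj le_rfl
      rwa [P.pts_last] at this
    have ha' : ∀ j, j ≤ P.n → a ≤ P.pts j := by
      intro j hj
      have := hple 0 j (by omega) hj
      rwa [P.pts_zero] at this
    have hnotin : ∀ x ∈ DD, ∀ j, j < P.n → ¬(P.pts j < x ∧ x < P.pts (j+1)) := by
      rintro x hx j hj ⟨h1, h2⟩
      obtain ⟨i, hi, rfl⟩ := href x hx
      have hij : j < i := idxLt P.n P.pts P.pts_mono j i (by omega) h1
      have hij2 : i < j + 1 := idxLt P.n P.pts P.pts_mono i (j+1) hi h2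
      omega
    -- key per-interval estimate
    have key : ∀ j, j < P.n →
        |g (P.tag j) * (f (P.pts (j+1)) - f (P.pts j))
            - (jf m σ L R (P.pts (j+1)) - jf m σ L R (P.pts j))|
          ≤ ε' * (jf m σ AL AR (P.pts (j+1)) - jf m σ AL AR (P.pts j)) := by
      intro j hj
      obtain ⟨hξ1, hξ2⟩ := htags j hj
      have hpq : P.pts j < P.pts (j+1) := P.pts_mono j hj
      have hpa : a ≤ P.pts j := ha' j (by omega)
      have hqb : P.pts (j+1) ≤ b := hb' (j+1) (by omega)
      obtain ⟨k, hk, hk1, hk2⟩ := locate' m σ hσ hm (P.pts j)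
        (by rw [hσ0]; exact hpa) (by rw [hσm]; linarith)
      have hqk : P.pts (j+1) ≤ σ (k+1) := by
        by_contra hcon
        push_neg at hcon
        exact hnotin (σ (k+1)) (hmemσ (k+1) (by omega)) j hj ⟨hk2, hcon⟩
      rcases eq_or_lt_of_le hk1 with hpk | hpk
      · -- Case B : P.pts j = σ k
        have hσkq : σ k < P.pts (j+1) := hpk ▸ hpq
        have hql : P.pts (j+1) < σ (k+1) := by
          rcases eq_or_lt_of_le hqk with he | he
          · exfalso
            have h1 := hgapQ k hk
            refine hnotin (σ k + η) (hmemp k hk) j hj ⟨?_, ?_⟩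
            · rw [← hpk]; linarith
            · rw [he]; linarith
          · exact he
        have hqle : P.pts (j+1) ≤ σ k + η := by
          by_contra hcon
          push_neg at hcon
          exact hnotin (σ k + η) (hmemp k hk) j hj ⟨by rw [← hpk]; linarith, hcon⟩
        have hgb : |g (P.tag j) - gr k| < ε' := by
          refine ((hQ k (by omega)).1 hk).2 (P.tag j) ?_ ?_
          · rw [← hpk] at hξ1; exact hξ1
          · linarith
        have hfq : f (P.pts (j+1)) = c k := hc k hk _ ⟨hσkq, hql⟩
        have hfp : f (P.pts j) = f (σ k) := by rw [← hpk]
        have hdu : jf m σ L R (P.pts (j+1)) - jf m σ L R (P.pts j) = R k := by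
          rw [← hpk]
          exact jf_right_eq m σ hσ L R hk hσkq hql
        have hdV : AR k ≤ jf m σ AL AR (P.pts (j+1)) - jf m σ AL AR (P.pts j) := by
          rw [← hpk]
          exact jf_right_le m σ hσ AL AR hALnn hARnn hk hσkq
        rw [hfq, hfp, hdu, hRdef]
        have heq : g (P.tag j) * (c k - f (σ k)) - gr k * (c k - f (σ k))
            = (g (P.tag j) - gr k) * (c k - f (σ k)) := by ring
        rw [heq, abs_mul]
        have h5 : |g (P.tag j) - gr k| * |c k - f (σ k)| ≤ ε' * AR k := by
          rw [hARdef]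
          exact mul_le_mul_of_nonneg_right hgb.le (abs_nonneg _)
        exact h5.trans (mul_le_mul_of_nonneg_left hdV hε'.le)
      · rcases eq_or_lt_of_le hqk with hqeq | hql
        · -- Case C : P.pts (j+1) = σ (k+1)
          have hpl : P.pts j < σ (k+1) := by rw [← hqeq]; exact hpq
          have hple' : σ (k+1) - η ≤ P.pts j := by
            by_contra hcon
            push_neg at hcon
            have h1 := hgapQ k hk
            refine hnotin (σ (k+1) - η) (hmemm (k+1) (by omega) (by omega)) j hj ⟨hcon, ?_⟩
            rw [hqeq]; linarith
          have hgb : |g (P.tag j) - gl (k+1)| < ε' := by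
            refine (hQ (k+1) (by omega)).2 (by omega) (by omega) (P.tag j) (by linarith) ?_
            rw [← hqeq]; exact hξ2
          have hfp : f (P.pts j) = c k := hc k hk _ ⟨hpk, hpl⟩
          have hfq : f (P.pts (j+1)) = f (σ (k+1)) := by rw [hqeq]
          have hdu : jf m σ L R (P.pts (j+1)) - jf m σ L R (P.pts j) = L k := by
            rw [hqeq]
            exact jf_left_eq m σ hσ L R hk hpk hpl
          have hdV : AL k ≤ jf m σ AL AR (P.pts (j+1)) - jf m σ AL AR (P.pts j) := by
            rw [hqeq]
            exact jf_left_le m σ hσ AL AR hALnn hARnn hk hpl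
          rw [hfq, hfp, hdu, hLdef]
          have heq : g (P.tag j) * (f (σ (k+1)) - c k) - gl (k+1) * (f (σ (k+1)) - c k)
              = (g (P.tag j) - gl (k+1)) * (f (σ (k+1)) - c k) := by ring
          rw [heq, abs_mul]
          have h5 : |g (P.tag j) - gl (k+1)| * |f (σ (k+1)) - c k| ≤ ε' * AL k := by
            rw [hALdef]
            exact mul_le_mul_of_nonneg_right hgb.le (abs_nonneg _)
          exact h5.trans (mul_le_mul_of_nonneg_left hdV hε'.le)
        · -- Case A : interior
          have hfp : f (P.pts j) = c k := hc k hk _ ⟨hpk, hk2⟩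
          have hfq : f (P.pts (j+1)) = c k := hc k hk _ ⟨hpk.trans hpq, hql⟩
          have hdu : jf m σ L R (P.pts (j+1)) = jf m σ L R (P.pts j) :=
            jf_const m σ hσ L R hk hpk hpq.le hql
          have hdV : 0 ≤ jf m σ AL AR (P.pts (j+1)) - jf m σ AL AR (P.pts j) :=
            sub_nonneg.mpr (jf_mono m σ hσ AL AR hALnn hARnn hpq.le)
          rw [hfq, hfp, hdu]
          simp only [sub_self, mul_zero, abs_zero]
          positivity
    -- assemble
    have hRS : RS g f P = ∑ j ∈ Finset.range P.n,
        g (P.tag j) * (f (P.pts (j+1)) - f (P.pts j)) := rfl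
    have hval : ∑ k ∈ Finset.range m, (gl (k+1) * (f (σ (k+1)) - c k) + gr k * (c k - f (σ k)))
        = ∑ j ∈ Finset.range P.n, (jf m σ L R (P.pts (j+1)) - jf m σ L R (P.pts j)) := by
      rw [Finset.sum_range_sub (fun j => jf m σ L R (P.pts j)), P.pts_last, P.pts_zero,
        ← hσm, ← hσ0, jf_last m σ hσ, jf_zero m σ hσ, sub_zero]
    rw [hRS, hval, ← Finset.sum_sub_distrib]
    have habs := Finset.abs_sum_le_sum_abs
      (fun j => g (P.tag j) * (f (P.pts (j+1)) - f (P.pts j))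
        - (jf m σ L R (P.pts (j+1)) - jf m σ L R (P.pts j))) (Finset.range P.n)
    have hsum2 : ∑ j ∈ Finset.range P.n,
        |g (P.tag j) * (f (P.pts (j+1)) - f (P.pts j))
          - (jf m σ L R (P.pts (j+1)) - jf m σ L R (P.pts j))|
        ≤ ∑ j ∈ Finset.range P.n,
          ε' * (jf m σ AL AR (P.pts (j+1)) - jf m σ AL AR (P.pts j)) := by
      apply Finset.sum_le_sum
      intro j hj
      exact key j (Finset.mem_range.mp hj)
    have hsum3 : ∑ j ∈ Finset.range P.n,
        ε' * (jf m σ AL AR (P.pts (j+1)) - jf m σ AL AR (P.pts j)) = ε' * Vb := by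
      rw [← Finset.mul_sum, Finset.sum_range_sub (fun j => jf m σ AL AR (P.pts j)),
        P.pts_last, P.pts_zero, ← hσm, ← hσ0, jf_last m σ hσ, jf_zero m σ hσ, sub_zero,
        hVbdef]
    have hfinal : ε' * Vb < ε := by
      have h1 : ε' * Vb < ε' * (Vb + 1) := by
        apply mul_lt_mul_of_pos_left _ hε'
        linarith
      have h2 : ε' * (Vb + 1) = ε := by
        rw [hε'def]
        field_simp
      linarith
    calc |∑ j ∈ Finset.range P.n,
        (g (P.tag j) * (f (P.pts (j+1)) - f (P.pts j))
          - (jf m σ L R (P.pts (j+1)) - jf m σ L R (P.pts j)))|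
        ≤ _ := habs
      _ ≤ _ := hsum2
      _ = ε' * Vb := hsum3
      _ < ε := hfinal

lemma ks_step (a b : ℝ) (hab : a < b) (f g : ℝ → ℝ)
    (m : ℕ) (σ : ℕ → ℝ) (hm : 0 < m) (hσ0 : σ 0 = a) (hσm : σ m = b)
    (hσ : ∀ k < m, σ k < σ (k + 1))
    (c gl gr : ℕ → ℝ)
    (hc : ∀ k < m, ∀ x ∈ Set.Ioo (σ k) (σ (k + 1)), f x = c k)
    (hgl : ∀ k, 1 ≤ k → k ≤ m → ∀ ε > 0, ∃ η > 0, ∀ x, σ k - η ≤ x → x < σ k → |g x - gl k| < ε)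
    (hgr : ∀ k < m, ∀ ε > 0, ∃ η > 0, ∀ x, σ k < x → x ≤ σ k + η → |g x - gr k| < ε) :
    HasKS f g a b (∑ k ∈ Finset.range m,
      (f (σ k) * (gr k - g (σ k)) + c k * (gl (k+1) - gr k)
        + f (σ (k+1)) * (g (σ (k+1)) - gl (k+1)))) := by
  classical
  intro ε hε
  set T : ℕ → ℝ := fun k => f (σ k) * (gr k - g (σ k)) + c k * (gl (k+1) - gr k)
      + f (σ (k+1)) * (g (σ (k+1)) - gl (k+1)) with hTdef
  set M : ℕ → ℝ → ℝ := fun k x => f (σ k) * (gr k - g (σ k)) + c k * (g x - gr k) with hMdef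
  set AL : ℕ → ℝ := fun k => |f (σ (k+1)) - c k| with hALdef
  set AR : ℕ → ℝ := fun k => |c k - f (σ k)| with hARdef
  set Vb : ℝ := ∑ k ∈ Finset.range m, (AL k + AR k) with hVbdef
  have hVb : 0 ≤ Vb := Finset.sum_nonneg fun k _ => add_nonneg (abs_nonneg _) (abs_nonneg _)
  set ε' : ℝ := ε / (2 * (Vb + 1)) with hε'def
  have hε' : 0 < ε' := div_pos hε (by linarith)
  have hALnn : ∀ k, 0 ≤ AL k := fun k => abs_nonneg _
  have hARnn : ∀ k, 0 ≤ AR k := fun k => abs_nonneg _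
  set Q : ℕ → ℝ → Prop := fun k η =>
    (k < m → σ k + 3*η ≤ σ (k+1) ∧ ∀ x, σ k < x → x ≤ σ k + η → |g x - gr k| < ε') ∧
    (1 ≤ k → k ≤ m → ∀ x, σ k - η ≤ x → x < σ k → |g x - gl k| < ε') with hQdef
  have hQmono : ∀ k, ∀ η η' : ℝ, 0 < η → η ≤ η' → Q k η' → Q k η := by
    rintro k η η' hη hle ⟨h1, h2⟩
    constructor
    · intro hk
      obtain ⟨ha1, ha2⟩ := h1 hk
      exact ⟨by linarith, fun x hx1 hx2 => ha2 x hx1 (by linarith)⟩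
    · intro hk1 hk2
      exact fun x hx1 hx2 => h2 hk1 hk2 x (by linarith) hx2
  have hQex : ∀ k, ∃ η > 0, Q k η := by
    intro k
    by_cases hk : k < m
    · obtain ⟨η1, hη1, hb1⟩ := hgr k hk ε' hε'
      have hgap : 0 < σ (k+1) - σ k := by linarith [hσ k hk]
      by_cases hk1 : 1 ≤ k
      · obtain ⟨η2, hη2, hb2⟩ := hgl k hk1 (by omega) ε' hε'
        refine ⟨min (min η1 η2) ((σ (k+1) - σ k)/3),
          lt_min (lt_min hη1 hη2) (by linarith), ?_, ?_⟩
        · intro _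
          constructor
          · have := min_le_right (min η1 η2) ((σ (k+1) - σ k)/3)
            linarith
          · intro x hx1 hx2
            refine hb1 x hx1 ?_
            have h3 := min_le_left (min η1 η2) ((σ (k+1) - σ k)/3)
            have h4 := min_le_left η1 η2
            linarith
        · intro _ _ x hx1 hx2
          refine hb2 x ?_ hx2
          have h3 := min_le_left (min η1 η2) ((σ (k+1) - σ k)/3)
          have h4 := min_le_right η1 η2
          linarith
      · refine ⟨min η1 ((σ (k+1) - σ k)/3), lt_min hη1 (by linarith), ?_, ?_⟩
        · intro _
          constructor
          · have := min_le_right η1 ((σ (k+1) - σ k)/3)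
            linarith
          · intro x hx1 hx2
            refine hb1 x hx1 ?_
            have := min_le_left η1 ((σ (k+1) - σ k)/3)
            linarith
        · intro h1; omega
    · by_cases hk2 : 1 ≤ k ∧ k ≤ m
      · obtain ⟨η2, hη2, hb2⟩ := hgl k hk2.1 hk2.2 ε' hε'
        exact ⟨η2, hη2, fun h => (hk h).elim, fun _ _ => hb2⟩
      · exact ⟨1, one_pos, fun h => (hk h).elim, fun h1 h2 => (hk2 ⟨h1, h2⟩).elim⟩
  obtain ⟨η0, hη0, hQ0⟩ := exists_eta Q hQmono hQex m
  set η : ℝ := min η0 (1/2) with hηdef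
  have hη : 0 < η := lt_min hη0 (by norm_num)
  have hη2 : η ≤ 1/2 := min_le_right _ _
  have hQ : ∀ k ≤ m, Q k η := fun k hk => hQmono k η η0 hη (min_le_left _ _) (hQ0 k hk)
  have hgapQ : ∀ i, i < m → σ i + 3*η ≤ σ (i+1) := fun i hi => ((hQ i (by omega)).1 hi).1
  set dσ : ℝ → ℝ := fun t => ((Finset.range (m+1)).image (fun i => |t - σ i|)).min'
    (Finset.Nonempty.image ⟨0, Finset.mem_range.mpr (by omega)⟩ _) with hdσdef
  set δ : ℝ → ℝ := fun t => if ∃ i, i ≤ m ∧ σ i = t then η else min (1/2) (dσ t / 2) with hδdef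
  have hdσle : ∀ t, ∀ i, i ≤ m → dσ t ≤ |t - σ i| := by
    intro t i hi
    apply Finset.min'_le
    exact Finset.mem_image_of_mem _ (Finset.mem_range.mpr (by omega))
  have hdσpos : ∀ t, (¬∃ i, i ≤ m ∧ σ i = t) → 0 < dσ t := by
    intro t ht
    have hmem := Finset.min'_mem ((Finset.range (m+1)).image (fun i => |t - σ i|))
      (Finset.Nonempty.image ⟨0, Finset.mem_range.mpr (by omega)⟩ _)
    rw [Finset.mem_image] at hmem
    obtain ⟨i, hi, heq⟩ := hmem
    rw [Finset.mem_range] at hi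
    rw [hdσdef]
    simp only
    rw [← heq]
    rw [abs_pos, sub_ne_zero]
    intro hcon
    exact ht ⟨i, by omega, hcon.symm⟩
  refine ⟨δ, ?_, ?_⟩
  · intro t _
    by_cases ht : ∃ i, i ≤ m ∧ σ i = t
    · rw [hδdef]
      simp only [if_pos ht]
      exact ⟨hη, by linarith⟩
    · rw [hδdef]
      simp only [if_neg ht]
      have := hdσpos t ht
      constructor
      · apply lt_min (by norm_num) (by linarith)
      · calc min (1/2 : ℝ) (dσ t / 2) ≤ 1/2 := min_le_left _ _
          _ < 1 := by norm_num
  · intro P hfine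
    have hple : ∀ i j, i ≤ j → j ≤ P.n → P.pts i ≤ P.pts j :=
      fun i j => monoLe' P.n P.pts P.pts_mono i j
    have hb' : ∀ j, j ≤ P.n → P.pts j ≤ b := by
      intro j hj
      have := hple j P.n hj le_rfl
      rwa [P.pts_last] at this
    have ha' : ∀ j, j ≤ P.n → a ≤ P.pts j := by
      intro j hj
      have := hple 0 j (by omega) hj
      rwa [P.pts_zero] at this
    -- key estimate
    have key : ∀ j, j < P.n →
        |f (P.tag j) * (g (P.pts (j+1)) - g (P.pts j))
            - (wf m σ T M (P.pts (j+1)) - wf m σ T M (P.pts j))|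
          ≤ ε' * (2 * (jf m σ AL AR (P.pts (j+1)) - jf m σ AL AR (P.pts j))) := by
      intro j hj
      obtain ⟨hξ1, hξ2⟩ := P.tag_mem j hj
      have hpq : P.pts j < P.pts (j+1) := P.pts_mono j hj
      have hpa : a ≤ P.pts j := ha' j (by omega)
      have hqb : P.pts (j+1) ≤ b := hb' (j+1) (by omega)
      have hsub := hfine j hj
      have hfl : P.tag j - δ (P.tag j) ≤ P.pts j :=
        (Set.mem_Icc.mp (hsub (Set.mem_Icc.mpr ⟨le_rfl, hpq.le⟩))).1
      have hfr : P.pts (j+1) ≤ P.tag j + δ (P.tag j) :=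
        (Set.mem_Icc.mp (hsub (Set.mem_Icc.mpr ⟨hpq.le, le_rfl⟩))).2
      have hVd : 0 ≤ jf m σ AL AR (P.pts (j+1)) - jf m σ AL AR (P.pts j) :=
        sub_nonneg.mpr (jf_mono m σ hσ AL AR hALnn hARnn hpq.le)
      by_cases hξσ : ∃ i, i ≤ m ∧ σ i = P.tag j
      · -- tag is a division point σ k
        obtain ⟨k, hkm, hkξ⟩ := hξσ
        have hδξ : δ (P.tag j) = η := by
          rw [hδdef]
          simp only [if_pos (⟨k, hkm, hkξ⟩ : ∃ i, i ≤ m ∧ σ i = P.tag j)]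
        rw [hδξ] at hfl hfr
        -- right piece
        have hbr1 : |f (σ k) * (g (P.pts (j+1)) - g (σ k))
              - (wf m σ T M (P.pts (j+1)) - wf m σ T M (σ k))|
            ≤ ε' * (jf m σ AL AR (P.pts (j+1)) - jf m σ AL AR (σ k)) := by
          rcases eq_or_lt_of_le (hkξ ▸ hξ2 : σ k ≤ P.pts (j+1)) with he | he
          · rw [← he]
            simp [sub_self]
          · have hkm' : k < m := by
              have h1 : σ k < σ m := by
                rw [hσm]
                exact lt_of_lt_of_le he hqb
              exact idxLt m σ hσ k m hkm h1
            have hq1 : P.pts (j+1) ≤ σ k + η := by rw [hkξ]; linarith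
            have hq2 : P.pts (j+1) < σ (k+1) := by
              have := hgapQ k hkm'
              linarith
            have hgb : |g (P.pts (j+1)) - gr k| < ε' :=
              ((hQ k (by omega)).1 hkm').2 (P.pts (j+1)) he hq1
            rw [wf_right m σ hσ T M hkm' he hq2]
            have heq2 : f (σ k) * (g (P.pts (j+1)) - g (σ k)) - M k (P.pts (j+1))
                = (f (σ k) - c k) * (g (P.pts (j+1)) - gr k) := by
              rw [hMdef]; ring
            rw [heq2, abs_mul]
            have h5 : |f (σ k) - c k| * |g (P.pts (j+1)) - gr k| ≤ AR k * ε' := by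
              rw [hARdef]
              simp only
              rw [abs_sub_comm (f (σ k)) (c k)]
              exact mul_le_mul_of_nonneg_left hgb.le (abs_nonneg _)
            refine h5.trans ?_
            rw [mul_comm (ε' : ℝ)]
            exact mul_le_mul_of_nonneg_right
              (jf_right_le m σ hσ AL AR hALnn hARnn hkm' he) hε'.le
        -- left piece
        have hbr2 : |f (σ k) * (g (σ k) - g (P.pts j))
              - (wf m σ T M (σ k) - wf m σ T M (P.pts j))|
            ≤ ε' * (jf m σ AL AR (σ k) - jf m σ AL AR (P.pts j)) := by
          rcases eq_or_lt_of_le (hkξ ▸ hξ1 : P.pts j ≤ σ k) with he | he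
          · rw [he]
            simp [sub_self]
          · have hk1 : 1 ≤ k := by
              by_contra hcon
              have hk0 : k = 0 := by omega
              rw [hk0, hσ0] at he
              linarith
            have hkk : k - 1 + 1 = k := by omega
            have hgap1 : σ (k-1) + 3*η ≤ σ k := by
              have := hgapQ (k-1) (by omega)
              rwa [hkk] at this
            have hpge : σ k - η ≤ P.pts j := by rw [hkξ]; linarith
            have hpgt : σ (k-1) < P.pts j := by linarith
            have hgb : |g (P.pts j) - gl k| < ε' :=
              (hQ k hkm).2 hk1 hkm (P.pts j) hpge he
            have hwl := wf_left m σ hσ T M (k := k-1) (p := P.pts j) (by omega)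
              hpgt (by rw [hkk]; exact he)
            rw [hkk] at hwl
            rw [hwl]
            have heq2 : f (σ k) * (g (σ k) - g (P.pts j)) - (T (k-1) - M (k-1) (P.pts j))
                = (c (k-1) - f (σ k)) * (g (P.pts j) - gl k) := by
              rw [hTdef, hMdef]
              simp only
              rw [hkk]
              ring
            rw [heq2, abs_mul]
            have h5 : |c (k-1) - f (σ k)| * |g (P.pts j) - gl k| ≤ AL (k-1) * ε' := by
              rw [hALdef]
              simp only
              rw [hkk, abs_sub_comm (c (k-1)) (f (σ k))]
              exact mul_le_mul_of_nonneg_left hgb.le (abs_nonneg _)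
            refine h5.trans ?_
            rw [mul_comm (ε' : ℝ)]
            have hjl := jf_left_le m σ hσ AL AR hALnn hARnn (k := k-1) (p := P.pts j)
              (by omega) (by rw [hkk]; exact he)
            rw [hkk] at hjl
            exact mul_le_mul_of_nonneg_right hjl hε'.le
        have hsplit : f (P.tag j) * (g (P.pts (j+1)) - g (P.pts j))
            - (wf m σ T M (P.pts (j+1)) - wf m σ T M (P.pts j))
            = (f (σ k) * (g (P.pts (j+1)) - g (σ k))
                - (wf m σ T M (P.pts (j+1)) - wf m σ T M (σ k)))
              + (f (σ k) * (g (σ k) - g (P.pts j))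
                - (wf m σ T M (σ k) - wf m σ T M (P.pts j))) := by
          rw [hkξ]; ring
        rw [hsplit]
        calc |_ + _| ≤ _ := abs_add_le _ _
          _ ≤ ε' * (jf m σ AL AR (P.pts (j+1)) - jf m σ AL AR (σ k))
              + ε' * (jf m σ AL AR (σ k) - jf m σ AL AR (P.pts j)) := add_le_add hbr1 hbr2
          _ ≤ ε' * (2 * (jf m σ AL AR (P.pts (j+1)) - jf m σ AL AR (P.pts j))) := by
            have hσk1 : P.pts j ≤ σ k := hkξ ▸ hξ1
            have hσk2 : σ k ≤ P.pts (j+1) := hkξ ▸ hξ2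
            have hm1 : jf m σ AL AR (P.pts j) ≤ jf m σ AL AR (σ k) :=
              jf_mono m σ hσ AL AR hALnn hARnn hσk1
            have hm2 : jf m σ AL AR (σ k) ≤ jf m σ AL AR (P.pts (j+1)) :=
              jf_mono m σ hσ AL AR hALnn hARnn hσk2
            nlinarith [hε'.le]
      · -- tag is not a division point
        have hδξ : δ (P.tag j) = min (1/2) (dσ (P.tag j) / 2) := by
          rw [hδdef]
          simp only [if_neg hξσ]
        have hdpos := hdσpos _ hξσ
        have hnoσ : ∀ i, i ≤ m → ¬(P.pts j ≤ σ i ∧ σ i ≤ P.pts (j+1)) := by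
          rintro i hi ⟨h1, h2⟩
          have hd1 : |P.tag j - σ i| ≤ δ (P.tag j) := by
            rw [abs_le]
            constructor <;> [linarith; linarith]
          have hd2 : dσ (P.tag j) ≤ |P.tag j - σ i| := hdσle _ i hi
          have hd3 : δ (P.tag j) ≤ dσ (P.tag j) / 2 := by
            rw [hδξ]; exact min_le_right _ _
          linarith
        obtain ⟨k, hk, hk1, hk2⟩ := locate' m σ hσ hm (P.pts j)
          (by rw [hσ0]; exact hpa) (by rw [hσm]; linarith)
        have hk1' : σ k < P.pts j := by
          rcases eq_or_lt_of_le hk1 with he | he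
          · exact ((hnoσ k (by omega)) ⟨he.ge, by linarith⟩).elim
          · exact he
        have hq2 : P.pts (j+1) < σ (k+1) := by
          rcases lt_or_ge (P.pts (j+1)) (σ (k+1)) with h | h
          · exact h
          · exact ((hnoσ (k+1) (by omega)) ⟨by linarith, h⟩).elim
        have hfξ : f (P.tag j) = c k := hc k hk _ ⟨by linarith, by linarith⟩
        rw [wf_opendiff m σ hσ T M hk hk1' hpq.le hq2, hfξ]
        have : c k * (g (P.pts (j+1)) - g (P.pts j)) - (M k (P.pts (j+1)) - M k (P.pts j))
            = 0 := by
          rw [hMdef]; ring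
        rw [this, abs_zero]
        positivity
    -- assemble
    have hRS : RS f g P = ∑ j ∈ Finset.range P.n,
        f (P.tag j) * (g (P.pts (j+1)) - g (P.pts j)) := rfl
    have hval : ∑ k ∈ Finset.range m,
        (f (σ k) * (gr k - g (σ k)) + c k * (gl (k+1) - gr k)
          + f (σ (k+1)) * (g (σ (k+1)) - gl (k+1)))
        = ∑ j ∈ Finset.range P.n, (wf m σ T M (P.pts (j+1)) - wf m σ T M (P.pts j)) := by
      rw [Finset.sum_range_sub (fun j => wf m σ T M (P.pts j)), P.pts_last, P.pts_zero,
        ← hσm, ← hσ0, wf_last m σ hσ, wf_zero m σ hσ, sub_zero]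
    rw [hRS, hval, ← Finset.sum_sub_distrib]
    have habs := Finset.abs_sum_le_sum_abs
      (fun j => f (P.tag j) * (g (P.pts (j+1)) - g (P.pts j))
        - (wf m σ T M (P.pts (j+1)) - wf m σ T M (P.pts j))) (Finset.range P.n)
    have hsum2 : ∑ j ∈ Finset.range P.n,
        |f (P.tag j) * (g (P.pts (j+1)) - g (P.pts j))
          - (wf m σ T M (P.pts (j+1)) - wf m σ T M (P.pts j))|
        ≤ ∑ j ∈ Finset.range P.n,
          ε' * (2 * (jf m σ AL AR (P.pts (j+1)) - jf m σ AL AR (P.pts j))) := by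
      apply Finset.sum_le_sum
      intro j hj
      exact key j (Finset.mem_range.mp hj)
    have hsum3 : ∑ j ∈ Finset.range P.n,
        ε' * (2 * (jf m σ AL AR (P.pts (j+1)) - jf m σ AL AR (P.pts j)))
        = ε' * (2 * Vb) := by
      have : ∀ j ∈ Finset.range P.n,
          ε' * (2 * (jf m σ AL AR (P.pts (j+1)) - jf m σ AL AR (P.pts j)))
          = (2 * ε') * (jf m σ AL AR (P.pts (j+1)) - jf m σ AL AR (P.pts j)) := by
        intro j _; ring
      rw [Finset.sum_congr rfl this, ← Finset.mul_sum,
        Finset.sum_range_sub (fun j => jf m σ AL AR (P.pts j)),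
        P.pts_last, P.pts_zero, ← hσm, ← hσ0, jf_last m σ hσ, jf_zero m σ hσ, sub_zero,
        hVbdef]
      ring
    have hfinal : ε' * (2 * Vb) < ε := by
      have hne : (2:ℝ) * (Vb + 1) ≠ 0 := by positivity
      have h2 : ε' * (2 * (Vb + 1)) = ε := by
        rw [hε'def, div_mul_cancel₀ ε hne]
      have h3 : ε' * (2 * Vb) < ε' * (2 * (Vb + 1)) := by
        apply mul_lt_mul_of_pos_left _ hε'
        linarith
      linarith
    calc |∑ j ∈ Finset.range P.n,
        (f (P.tag j) * (g (P.pts (j+1)) - g (P.pts j))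
          - (wf m σ T M (P.pts (j+1)) - wf m σ T M (P.pts j)))|
        ≤ _ := habs
      _ ≤ _ := hsum2
      _ = ε' * (2 * Vb) := hsum3
      _ < ε := hfinal


theorem stmt16 (a b : ℝ) (hab : a < b) (f g : ℝ → ℝ)
    (hf : IsStepFunction f a b) (hg : Regulated g a b) :
    ∃ K D : ℝ, HasKS f g a b K ∧ HasDushnik g f a b D ∧
      K = f b * g b - f a * g a - D := by
  classical
  obtain ⟨m, σ, hm, hσ0, hσm, hσ, hconst⟩ := hf
  choose! gl0 hgl0 using hg.1
  choose! gr0 hgr0 using hg.2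
  set c : ℕ → ℝ := fun k => f ((σ k + σ (k+1))/2) with hcdef
  set gl : ℕ → ℝ := fun k => gl0 (σ k) with hgldef
  set gr : ℕ → ℝ := fun k => gr0 (σ k) with hgrdef
  have hc : ∀ k < m, ∀ x ∈ Set.Ioo (σ k) (σ (k+1)), f x = c k := by
    intro k hk x hx
    have h1 := hσ k hk
    have hmid : (σ k + σ (k+1))/2 ∈ Set.Ioo (σ k) (σ (k+1)) := ⟨by linarith, by linarith⟩
    exact hconst k hk x hx _ hmid
  have hglε : ∀ k, 1 ≤ k → k ≤ m → ∀ ε > 0, ∃ η > 0,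
      ∀ x, σ k - η ≤ x → x < σ k → |g x - gl k| < ε := by
    intro k hk1 hk2 ε hε
    have hamem : a < σ k := by
      rw [← hσ0]
      exact monoLt' m σ hσ 0 k (by omega) hk2
    have hbmem : σ k ≤ b := by
      rw [← hσm]
      exact monoLe' m σ hσ k m hk2 le_rfl
    have ht := hgl0 (σ k) ⟨hamem, hbmem⟩
    rw [Metric.tendsto_nhdsWithin_nhds] at ht
    obtain ⟨d, hd, hball⟩ := ht ε hε
    refine ⟨min (d/2) (σ k - a), lt_min (by linarith) (by linarith), ?_⟩
    intro x hx1 hx2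
    have hxa : a ≤ x := by
      have := min_le_right (d/2) (σ k - a)
      linarith
    have hdist : dist x (σ k) < d := by
      rw [Real.dist_eq, abs_of_nonpos (by linarith)]
      have := min_le_left (d/2) (σ k - a)
      linarith
    have := hball (Set.mem_Ico.mpr ⟨hxa, hx2⟩) hdist
    rw [Real.dist_eq] at this
    exact this
  have hgrε : ∀ k < m, ∀ ε > 0, ∃ η > 0,
      ∀ x, σ k < x → x ≤ σ k + η → |g x - gr k| < ε := by
    intro k hk ε hε
    have hamem : a ≤ σ k := by
      rw [← hσ0]
      exact monoLe' m σ hσ 0 k (by omega) (by omega)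
    have hbmem : σ k < b := by
      rw [← hσm]
      exact monoLt' m σ hσ k m hk le_rfl
    have ht := hgr0 (σ k) ⟨hamem, hbmem⟩
    rw [Metric.tendsto_nhdsWithin_nhds] at ht
    obtain ⟨d, hd, hball⟩ := ht ε hε
    refine ⟨min (d/2) (b - σ k), lt_min (by linarith) (by linarith), ?_⟩
    intro x hx1 hx2
    have hxb : x ≤ b := by
      have := min_le_right (d/2) (b - σ k)
      linarith
    have hdist : dist x (σ k) < d := by
      rw [Real.dist_eq, abs_of_nonneg (by linarith)]
      have := min_le_left (d/2) (b - σ k)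
      linarith
    have := hball (Set.mem_Ioc.mpr ⟨hx1, hxb⟩) hdist
    rw [Real.dist_eq] at this
    exact this
  refine ⟨∑ k ∈ Finset.range m,
      (f (σ k) * (gr k - g (σ k)) + c k * (gl (k+1) - gr k)
        + f (σ (k+1)) * (g (σ (k+1)) - gl (k+1))),
    ∑ k ∈ Finset.range m, (gl (k+1) * (f (σ (k+1)) - c k) + gr k * (c k - f (σ k))),
    ks_step a b hab f g m σ hm hσ0 hσm hσ c gl gr hc hglε hgrε,
    dushnik_step a b hab f g m σ hm hσ0 hσm hσ c gl gr hc hglε hgrε, ?_⟩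
  have hKD : (∑ k ∈ Finset.range m,
      (f (σ k) * (gr k - g (σ k)) + c k * (gl (k+1) - gr k)
        + f (σ (k+1)) * (g (σ (k+1)) - gl (k+1))))
      + (∑ k ∈ Finset.range m, (gl (k+1) * (f (σ (k+1)) - c k) + gr k * (c k - f (σ k))))
      = f b * g b - f a * g a := by
    rw [← Finset.sum_add_distrib]
    have hterm : ∀ k ∈ Finset.range m,
        (f (σ k) * (gr k - g (σ k)) + c k * (gl (k+1) - gr k)
          + f (σ (k+1)) * (g (σ (k+1)) - gl (k+1)))
        + (gl (k+1) * (f (σ (k+1)) - c k) + gr k * (c k - f (σ k)))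
        = f (σ (k+1)) * g (σ (k+1)) - f (σ k) * g (σ k) := by
      intro k _
      ring
    rw [Finset.sum_congr rfl hterm,
      Finset.sum_range_sub (fun k => f (σ k) * g (σ k)), hσm, hσ0]
  linarith


end
end
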